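/- Let Ω ⊆ ℝⁿ be a nonempty open set and let f = (f̲, f̄) and g = (g̲, ḡ) be Hausdorff-continuous interval-valued functions on Ω. If D ⊆ Ω is dense in Ω and f(x) ≤ g(x) for every x ∈ D (i.e. f̲(x) ≤ g̲(x) and f̄(x) ≤ ḡ(x) for x ∈ D), then f ≤ g on all of Ω. -/
import Mathlib


open Filter Topology

/-- The lower Baire operator: `I(g)(x)` is the sup over neighbourhoods `V` of `x`
of the inf of `g` over `V`. -/
noncomputable def lowerBaire {X : Type*} [TopologicalSpace X] (g : X → EReal) (x : X) : EReal :=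
  ⨆ V ∈ nhds x, ⨅ y ∈ V, g y

/-- The upper Baire operator: `S(g)(x)` is the inf over neighbourhoods `V` of `x`
of the sup of `g` over `V`. -/
noncomputable def upperBaire {X : Type*} [TopologicalSpace X] (g : X → EReal) (x : X) : EReal :=
  ⨅ V ∈ nhds x, ⨆ y ∈ V, g y

/-- The pair `(lo, hi)` is an interval-valued function (`lo ≤ hi` pointwise) which is
segment-continuous: `I(lo) = lo` and `S(hi) = hi`. -/
def IsSCont {X : Type*} [TopologicalSpace X] (lo hi : X → EReal) : Prop :=
  (∀ x, lo x ≤ hi x) ∧ lowerBaire lo = lo ∧ upperBaire hi = hi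

/-- The pair `(lo, hi)` is a Hausdorff-continuous interval-valued function: it is
s-continuous and minimal among s-continuous interval-valued functions `(glo, ghi)`
contained in it pointwise. -/
def IsHCont {X : Type*} [TopologicalSpace X] (lo hi : X → EReal) : Prop :=
  IsSCont lo hi ∧
    ∀ glo ghi : X → EReal, IsSCont glo ghi →
      (∀ x, lo x ≤ glo x) → (∀ x, ghi x ≤ hi x) → glo = lo ∧ ghi = hi


theorem lowerBaire_le {X : Type*} [TopologicalSpace X] (g : X → EReal) (x : X) :
    lowerBaire g x ≤ g x :=
  iSup₂_le fun V hV => iInf₂_le x (mem_of_mem_nhds hV)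

theorem le_upperBaire {X : Type*} [TopologicalSpace X] (g : X → EReal) (x : X) :
    g x ≤ upperBaire g x :=
  le_iInf₂ fun V hV => le_iSup₂_of_le x (mem_of_mem_nhds hV) le_rfl

theorem lowerBaire_mono {X : Type*} [TopologicalSpace X] {u v : X → EReal}
    (h : ∀ y, u y ≤ v y) (x : X) : lowerBaire u x ≤ lowerBaire v x :=
  iSup₂_mono fun _ _ => iInf₂_mono fun y _ => h y

theorem upperBaire_mono {X : Type*} [TopologicalSpace X] {u v : X → EReal}
    (h : ∀ y, u y ≤ v y) (x : X) : upperBaire u x ≤ upperBaire v x :=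
  iInf₂_mono fun _ _ => iSup₂_mono fun y _ => h y

theorem lowerBaire_eq_liminf {X : Type*} [TopologicalSpace X] (g : X → EReal) (x : X) :
    lowerBaire g x = Filter.liminf g (nhds x) :=
  Filter.liminf_eq_iSup_iInf.symm

theorem upperBaire_eq_limsup {X : Type*} [TopologicalSpace X] (g : X → EReal) (x : X) :
    upperBaire g x = Filter.limsup g (nhds x) :=
  Filter.limsup_eq_iInf_iSup.symm

/-- Theorem A1 c): if two Hausdorff-continuous interval-valued functions on a nonempty
open set Ω ⊆ ℝⁿ satisfy f ≤ g on a dense subset, then f ≤ g on all of Ω. -/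
theorem hcont_le_of_le_on_dense {n : ℕ} (Ω : Set (Fin n → ℝ))
    (hΩ : IsOpen Ω) (hne : Ω.Nonempty)
    (flo fhi glo ghi : ↥Ω → EReal)
    (hf : IsHCont flo fhi) (hg : IsHCont glo ghi)
    (D : Set ↥Ω) (hD : Dense D)
    (h : ∀ x ∈ D, flo x ≤ glo x ∧ fhi x ≤ ghi x) :
    ∀ x : ↥Ω, flo x ≤ glo x ∧ fhi x ≤ ghi x := by
  obtain ⟨⟨hfle, hflo, hfhi⟩, hfmin⟩ := hf
  obtain ⟨⟨hgle, hglo, hghi⟩, hgmin⟩ := hg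
  -- Step 1: flo ≤ ghi everywhere.
  have hA : ∀ x, flo x ≤ ghi x := by
    intro x
    have hnb : (𝓝[D] x).NeBot := mem_closure_iff_nhdsWithin_neBot.mp (hD x)
    have hev : ∀ᶠ y in 𝓝[D] x, flo y ≤ ghi y :=
      eventually_nhdsWithin_of_forall fun y hy => ((h y hy).1).trans (hgle y)
    calc flo x = Filter.liminf flo (𝓝 x) := by
            rw [← congrFun hflo x, lowerBaire_eq_liminf]
      _ ≤ Filter.liminf flo (𝓝[D] x) := liminf_le_liminf_of_le nhdsWithin_le_nhds
      _ ≤ Filter.liminf ghi (𝓝[D] x) := liminf_le_liminf hev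
      _ ≤ Filter.limsup ghi (𝓝[D] x) := liminf_le_limsup
      _ ≤ Filter.limsup ghi (𝓝 x) := limsup_le_limsup_of_le nhdsWithin_le_nhds
      _ = ghi x := by rw [← upperBaire_eq_limsup, congrFun hghi x]
  -- Step 2: the pair (flo ⊔ glo, ghi) is s-continuous, so flo ⊔ glo = glo.
  have hsup : IsSCont (fun y => flo y ⊔ glo y) ghi := by
    refine ⟨fun y => sup_le (hA y) (hgle y), funext fun x => ?_, hghi⟩
    refine le_antisymm (lowerBaire_le _ _) (sup_le ?_ ?_)
    · calc flo x = lowerBaire flo x := (congrFun hflo x).symm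
        _ ≤ _ := lowerBaire_mono (fun y => le_sup_left) x
    · calc glo x = lowerBaire glo x := (congrFun hglo x).symm
        _ ≤ _ := lowerBaire_mono (fun y => le_sup_right) x
  have h1 := (hgmin _ _ hsup (fun y => le_sup_right) (fun y => le_rfl)).1
  -- Step 3: the pair (flo, fhi ⊓ ghi) is s-continuous, so fhi ⊓ ghi = fhi.
  have hinf : IsSCont flo (fun y => fhi y ⊓ ghi y) := by
    refine ⟨fun y => le_inf (hfle y) (hA y), hflo, funext fun x => ?_⟩
    refine le_antisymm (le_inf ?_ ?_) (le_upperBaire (fun y => fhi y ⊓ ghi y) x)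
    · calc upperBaire _ x ≤ upperBaire fhi x := upperBaire_mono (fun y => inf_le_left) x
        _ = fhi x := congrFun hfhi x
    · calc upperBaire _ x ≤ upperBaire ghi x := upperBaire_mono (fun y => inf_le_right) x
        _ = ghi x := congrFun hghi x
  have h2 := (hfmin _ _ hinf (fun y => le_rfl) (fun y => inf_le_left)).2
  intro x
  exact ⟨sup_eq_right.mp (congrFun h1 x), inf_eq_left.mp (congrFun h2 x)⟩
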